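/- Let T:[0,1]^d→[0,1]^d be a piecewise expanding map, μ an exponentially mixing T-invariant Borel probability measure absolutely continuous with respect to m_d whose density h belongs to L^q(m_d) for some q>1, and f:[0,1]^d→[0,1]^d Lipschitz with constant p > 0 for the maximum norm. Let {r_n}_{n≥1} be a sequence in (ℝ_{≥0})^d with lim_{n→∞}|r_n| = 0 such that each nonzero r_n satisfies r_{n,i} > n^{−2} for all i, and let Ê_n be the associated sets (for admissible functions l_n as in the context). Then for every ball B ⊆ [0,1]^d there exists N such that for all n ≥ N: (1/2)·μ(B)·r_{n,1}⋯r_{n,d} ≤ μ(B ∩ Ê_n) ≤ 2·μ(B)·r_{n,1}⋯r_{n,d}. -/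

import Mathlib

open MeasureTheory Filter Set Metric
open scoped ENNReal NNReal Topology BigOperators

noncomputable section

/-- The closed unit cube `[0,1]^d` in `ℝ^d` with the maximum norm. -/
def unitCube (d : ℕ) : Set (Fin d → ℝ) := Set.Icc 0 1

/-- The half-open unit cube `[0,1)^d`. -/
def unitCubeIco (d : ℕ) : Set (Fin d → ℝ) := Set.univ.pi fun _ => Set.Ico (0:ℝ) 1

/-- The `(d-1)`-dimensional upper Minkowski content
`M^{*(d-1)}(A) = limsup_{ε→0⁺} m_d(A(ε))/ε`. -/
def upperMinkContent (d : ℕ) (A : Set (Fin d → ℝ)) : ℝ≥0∞ :=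
  Filter.limsup (fun ε : ℝ => volume (Metric.thickening ε A) / ENNReal.ofReal ε)
    (nhdsWithin 0 (Set.Ioi 0))

/-- Piecewise expanding map on `[0,1]^d`, with explicit expansion constant `L` and
boundary Minkowski-content constant `K`. -/
def IsPiecewiseExpandingWith (d : ℕ) (T : (Fin d → ℝ) → (Fin d → ℝ)) (L K : ℝ) : Prop :=
  Set.MapsTo T (unitCube d) (unitCube d) ∧ 1 < L ∧ 0 < K ∧
  ∃ (Q : ℕ) (U : Fin Q → Set (Fin d → ℝ)),
    (∀ i, (U i).Nonempty) ∧ (∀ i, IsOpen (U i)) ∧ (∀ i, IsConnected (U i)) ∧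
    (∀ i, U i ⊆ unitCube d) ∧
    (Pairwise fun i j => Disjoint (U i) (U j)) ∧
    (⋃ i, closure (U i)) = unitCube d ∧
    Set.InjOn T (⋃ i, U i) ∧
    (∀ i, ∃ g : (Fin d → ℝ) → (Fin d → ℝ),
        ContDiffOn ℝ 1 g (closure (U i)) ∧ Set.EqOn g T (U i)) ∧
    (∀ i, ∀ x ∈ U i, L ≤ ‖fderiv ℝ T x‖) ∧
    (∀ i, upperMinkContent d (frontier (U i)) ≤ ENNReal.ofReal K)

/-- Piecewise expanding map on `[0,1]^d`. -/
def IsPiecewiseExpanding (d : ℕ) (T : (Fin d → ℝ) → (Fin d → ℝ)) : Prop :=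
  ∃ L K : ℝ, IsPiecewiseExpandingWith d T L K

/-- `μ` is exponentially mixing for `T` on the class of Borel sets whose boundaries have
bounded `(d-1)`-dimensional upper Minkowski content. -/
def ExpMixing (d : ℕ) (T : (Fin d → ℝ) → (Fin d → ℝ)) (μ : Measure (Fin d → ℝ)) : Prop :=
  ∀ C₀ : ℝ, 0 < C₀ → ∃ c : ℝ, 0 < c ∧ ∃ τ : ℝ, 0 < τ ∧
    ∀ n : ℕ, 1 ≤ n → ∀ F G : Set (Fin d → ℝ), MeasurableSet F → MeasurableSet G →
      upperMinkContent d (frontier F) ≤ ENNReal.ofReal C₀ →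
      upperMinkContent d (frontier G) ≤ ENNReal.ofReal C₀ →
      |(μ (F ∩ T^[n] ⁻¹' G)).toReal - (μ F).toReal * (μ G).toReal| ≤
        (μ G).toReal * (c * Real.exp (-τ * n))

/-- `f` is a piecewise Lipschitz vector function on `S` (w.r.t. `μ`), with constant `p`. -/
def PiecewiseLipschitz (d : ℕ) (S : Set (Fin d → ℝ)) (μ : Measure (Fin d → ℝ))
    (f : (Fin d → ℝ) → (Fin d → ℝ)) : Prop :=
  ∃ p : ℝ, 0 < p ∧ ∃ (m : ℕ) (U : Fin m → Set (Fin d → ℝ)),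
    (∀ j, MeasurableSet (U j)) ∧ μ (S \ ⋃ j, U j) = 0 ∧
    ∀ j, ∀ x ∈ U j, ∀ y ∈ U j, ‖f x - f y‖ ≤ p * ‖x - y‖

/-- Coordinate-parallel hyperrectangle `R(y,r) = ∏_i [y_i - r_i, y_i + r_i]`. -/
def hyperRect {d : ℕ} (y r : Fin d → ℝ) : Set (Fin d → ℝ) := Set.Icc (y - r) (y + r)

/-- The twisted recurrence set `R^f({r_n})` with hyperrectangle targets. -/
def twistedRect (d : ℕ) (S : Set (Fin d → ℝ)) (T f : (Fin d → ℝ) → (Fin d → ℝ))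
    (r : ℕ → Fin d → ℝ) : Set (Fin d → ℝ) :=
  {x ∈ S | ∃ᶠ n in Filter.atTop, T^[n] x ∈ hyperRect (f x) (r n)}

/-- The hyperboloid `H(y,δ) = y + {z ∈ [-1,1]^d : |z₁⋯z_d| < δ}`. -/
def hyperboloid (d : ℕ) (y : Fin d → ℝ) (δ : ℝ) : Set (Fin d → ℝ) :=
  {x | (∀ i, |x i - y i| ≤ 1) ∧ |∏ i, (x i - y i)| < δ}

/-- The twisted recurrence set `R^{f×}({δ_n})` with hyperboloid targets. -/
def twistedHyp (d : ℕ) (S : Set (Fin d → ℝ)) (T f : (Fin d → ℝ) → (Fin d → ℝ))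
    (δ : ℕ → ℝ) : Set (Fin d → ℝ) :=
  {x ∈ S | ∃ᶠ n in Filter.atTop, T^[n] x ∈ hyperboloid d (f x) (δ n)}

/-- The auxiliary set `Ê_n` built from admissible dilation functions `l_n`
(`Ê_n = ∅` when `r_n = 0`). -/
def Ehat (d : ℕ) (T f : (Fin d → ℝ) → (Fin d → ℝ)) (r : ℕ → Fin d → ℝ)
    (l : ℕ → (Fin d → ℝ) → ℝ) (n : ℕ) : Set (Fin d → ℝ) :=
  if r n = 0 then ∅ else {x ∈ unitCube d | T^[n] x ∈ hyperRect (f x) (l n x • r n)}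

/-!
Partition the ball into about `δ^{-d}` boxes of side `δ = e^{-σn}`. On a box `F` the shift of
`f` is at most `pδ`, and since `r_{n,i} > n^{-2}` it is absorbed by changing the radius `l_n` by
`pδn²`; hence `Ê_n ∩ F` is squeezed between `F ∩ T^{-n} G⁻` and `F ∩ T^{-n} G⁺` for two rectangles
`G^±` centred at `f z`, `z ∈ F`. Boxes have boundaries of bounded Minkowski content, so exponential
mixing gives `μ(F ∩ T^{-n} G^±) = μ(F) μ(G^±) + O(e^{-τn})`, while Hölder's inequality for the
density `h ∈ L^q` makes the thin shell `G⁺ \ G⁻` of measure `O((n^{O(1)} e^{-σn})^{1-1/q})`. Both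
errors, summed over the boxes, are `o(n^{-2d})`, whereas `μ(G^±) ≈ r_{n,1}⋯r_{n,d} ≥ n^{-2d}`.
-/

open Function

theorem prod_sub_prod_le_pow_card_mul_sum {ι : Type*} (s : Finset ι) {x y : ι → ℝ} {M : ℝ}
    (hM : 1 ≤ M) (hx : ∀ i ∈ s, 0 ≤ x i) (hxy : ∀ i ∈ s, x i ≤ y i) (hyM : ∀ i ∈ s, y i ≤ M) :
    ∏ i ∈ s, y i - ∏ i ∈ s, x i ≤ M ^ s.card * ∑ i ∈ s, (y i - x i) := by
  classical
  induction s using Finset.induction_on with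
  | empty => simp
  | @insert a s ha ih =>
    simp only [Finset.forall_mem_insert] at hx hxy hyM
    have hxs : ∏ i ∈ s, x i ≤ M ^ s.card := by
      simpa using Finset.prod_le_prod hx.2 fun i hi => (hxy.2 i hi).trans (hyM.2 i hi)
    have hxys : ∏ i ∈ s, x i ≤ ∏ i ∈ s, y i := Finset.prod_le_prod hx.2 hxy.2
    have ih := ih hx.2 hxy.2 hyM.2
    rw [Finset.prod_insert ha, Finset.prod_insert ha, Finset.sum_insert ha,
      Finset.card_insert_of_notMem ha, pow_succ]
    have hMs : 0 ≤ M ^ s.card := by positivity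
    calc y a * ∏ i ∈ s, y i - x a * ∏ i ∈ s, x i
        = y a * (∏ i ∈ s, y i - ∏ i ∈ s, x i) + (y a - x a) * ∏ i ∈ s, x i := by ring
      _ ≤ M * (M ^ s.card * ∑ i ∈ s, (y i - x i)) + (y a - x a) * (M ^ s.card * M) := by
        gcongr ?_ + ?_
        · exact mul_le_mul hyM.1 ih (sub_nonneg.2 hxys) (zero_le_one.trans hM)
        · exact mul_le_mul_of_nonneg_left (hxs.trans (le_mul_of_one_le_right hMs hM))
            (sub_nonneg.2 hxy.1)
      _ = M ^ s.card * M * (y a - x a + ∑ i ∈ s, (y i - x i)) := by ring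

section Box

variable {ι : Type*} [Fintype ι]

theorem thickening_frontier_subset_Icc_sdiff_pi_Ioo {lo hi : ι → ℝ} {S : Set (ι → ℝ)}
    (hS : S ⊆ Icc lo hi) (hS' : univ.pi (fun i => Ioo (lo i) (hi i)) ⊆ S) (ε : ℝ) :
    thickening ε (frontier S) ⊆
      Icc (fun i => lo i - ε) (fun i => hi i + ε) \
        univ.pi (fun i => Ioo (lo i + ε) (hi i - ε)) := by
  intro z hz
  obtain ⟨w, hw, hzw⟩ := mem_thickening_iff.1 hz
  have hwlohi : w ∈ Icc lo hi := closure_minimal hS isClosed_Icc (frontier_subset_closure hw)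
  have hzw' : ∀ i, |z i - w i| < ε := fun i =>
    (dist_le_pi_dist z w i).trans_lt hzw
  refine ⟨⟨fun i => ?_, fun i => ?_⟩, fun hzP => ?_⟩
  · linarith [hwlohi.1 i, (abs_lt.1 (hzw' i)).1]
  · linarith [hwlohi.2 i, (abs_lt.1 (hzw' i)).2]
  · have hwP : w ∈ univ.pi (fun i => Ioo (lo i) (hi i)) := fun i _ => by
      have := hzP i (mem_univ i)
      constructor <;> linarith [this.1, this.2, abs_lt.1 (hzw' i)]
    exact hw.2 (interior_maximal hS' (isOpen_set_pi finite_univ fun _ _ => isOpen_Ioo) hwP)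

theorem volume_Icc_sdiff_pi_Ioo_le {lo hi : ι → ℝ} (hside : ∀ i, hi i - lo i ≤ 1) {ε : ℝ}
    (hε0 : 0 ≤ ε) (hε1 : ε ≤ 1) :
    volume (Icc (fun i => lo i - ε) (fun i => hi i + ε) \
        univ.pi (fun i => Ioo (lo i + ε) (hi i - ε))) ≤
      ENNReal.ofReal (3 ^ Fintype.card ι * (4 * Fintype.card ι) * ε) := by
  set X : ι → ℝ := fun i => max (hi i - ε - (lo i + ε)) 0
  set Y : ι → ℝ := fun i => max (hi i + ε - (lo i - ε)) 0
  have hsub : univ.pi (fun i => Ioo (lo i + ε) (hi i - ε)) ⊆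
      Icc (fun i => lo i - ε) (fun i => hi i + ε) := fun z hz =>
    ⟨fun i => by linarith [(hz i (mem_univ i)).1, (hz i (mem_univ i)).2],
      fun i => by linarith [(hz i (mem_univ i)).1, (hz i (mem_univ i)).2]⟩
  have hYX : ∏ i, Y i - ∏ i, X i ≤ 3 ^ Fintype.card ι * (4 * Fintype.card ι) * ε := by
    calc ∏ i, Y i - ∏ i, X i ≤ 3 ^ Fintype.card ι * ∑ i, (Y i - X i) :=
          prod_sub_prod_le_pow_card_mul_sum _ (by norm_num) (fun i _ => le_max_right _ _)
            (fun i _ => max_le_max (by linarith) le_rfl)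
            (fun i _ => max_le (by linarith [hside i]) (by norm_num))
      _ ≤ 3 ^ Fintype.card ι * ∑ _i : ι, 4 * ε := by
          gcongr with i
          have : Y i ≤ X i + 4 * ε := max_le (by linarith [le_max_left (hi i - ε - (lo i + ε)) 0])
            (by linarith [le_max_right (hi i - ε - (lo i + ε)) 0])
          linarith
      _ = 3 ^ Fintype.card ι * (4 * Fintype.card ι) * ε := by
          rw [Finset.sum_const, Finset.card_univ, nsmul_eq_mul]; ring
  rw [measure_sdiff hsub (MeasurableSet.univ_pi fun _ => measurableSet_Ioo).nullMeasurableSet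
      ((measure_mono hsub).trans_lt (by
        rw [Real.volume_Icc_pi]; exact ENNReal.prod_lt_top fun _ _ => ENNReal.ofReal_lt_top)).ne,
    Real.volume_Icc_pi, Real.volume_pi_Ioo]
  calc (∏ i, ENNReal.ofReal (hi i + ε - (lo i - ε))) - ∏ i, ENNReal.ofReal (hi i - ε - (lo i + ε))
      = ENNReal.ofReal (∏ i, Y i) - ENNReal.ofReal (∏ i, X i) := by
        rw [ENNReal.ofReal_prod_of_nonneg fun i _ => le_max_right _ _,
          ENNReal.ofReal_prod_of_nonneg fun i _ => le_max_right _ _]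
        simp
    _ = ENNReal.ofReal (∏ i, Y i - ∏ i, X i) :=
        (ENNReal.ofReal_sub _ (Finset.prod_nonneg fun i _ => le_max_right _ _)).symm
    _ ≤ _ := ENNReal.ofReal_le_ofReal hYX

end Box

theorem upperMinkContent_frontier_box_le {d : ℕ} {lo hi : Fin d → ℝ} (hside : ∀ i, hi i - lo i ≤ 1)
    {S : Set (Fin d → ℝ)} (hS : S ⊆ Icc lo hi)
    (hS' : univ.pi (fun i => Ioo (lo i) (hi i)) ⊆ S) :
    upperMinkContent d (frontier S) ≤ ENNReal.ofReal (3 ^ d * (4 * d)) := by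
  refine limsup_le_of_le (by isBoundedDefault) ?_
  filter_upwards [Ioo_mem_nhdsGT (zero_lt_one' ℝ)] with ε ⟨hε0, hε1⟩
  rw [ENNReal.div_le_iff (by simpa using hε0) ENNReal.ofReal_ne_top,
    ← ENNReal.ofReal_mul (by positivity)]
  calc volume (thickening ε (frontier S))
      ≤ volume (Icc (fun i => lo i - ε) (fun i => hi i + ε) \
          univ.pi (fun i => Ioo (lo i + ε) (hi i - ε))) :=
        measure_mono (thickening_frontier_subset_Icc_sdiff_pi_Ioo hS hS' ε)
    _ ≤ _ := by simpa using volume_Icc_sdiff_pi_Ioo_le hside hε0.le hε1.le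

theorem withDensity_ofReal_apply_le_eLpNorm_mul_rpow {α : Type*} [MeasurableSpace α]
    {ν : Measure α} {h : α → ℝ} (hh : ∀ x, 0 ≤ h x) (hmeas : AEStronglyMeasurable h ν)
    {q : ℝ} (hq : 1 ≤ q) {A : Set α} (hA : MeasurableSet A) :
    ν.withDensity (fun x => ENNReal.ofReal (h x)) A ≤
      eLpNorm h (ENNReal.ofReal q) ν * ν A ^ (1 - 1 / q) := by
  have hq1 : (1 : ℝ≥0∞) ≤ ENNReal.ofReal q := by simpa using ENNReal.ofReal_le_ofReal hq
  calc ν.withDensity (fun x => ENNReal.ofReal (h x)) A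
      = eLpNorm h 1 (ν.restrict A) := by
        rw [withDensity_apply _ hA, eLpNorm_one_eq_lintegral_enorm]
        exact lintegral_congr fun x => (Real.enorm_eq_ofReal (hh x)).symm
    _ ≤ eLpNorm h (ENNReal.ofReal q) (ν.restrict A) * ν.restrict A univ ^ (1 / 1 - 1 / q) := by
        simpa [ENNReal.toReal_ofReal (zero_le_one.trans hq)] using
          eLpNorm_le_eLpNorm_mul_rpow_measure_univ hq1 hmeas.restrict
    _ ≤ eLpNorm h (ENNReal.ofReal q) ν * ν A ^ (1 - 1 / q) := by
        rw [Measure.restrict_apply_univ, div_one]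
        gcongr
        exact Measure.restrict_le_self

theorem measureReal_withDensity_ofReal_le {α : Type*} [MeasurableSpace α] {ν : Measure α}
    {h : α → ℝ} (hh : ∀ x, 0 ≤ h x) {q : ℝ} (hq : 1 ≤ q) (hLq : MemLp h (ENNReal.ofReal q) ν)
    {A : Set α} (hA : MeasurableSet A) (hAfin : ν A ≠ ∞) :
    (ν.withDensity fun x => ENNReal.ofReal (h x)).real A ≤
      (eLpNorm h (ENNReal.ofReal q) ν).toReal * ν.real A ^ (1 - 1 / q) := by
  have hα : 0 ≤ 1 - 1 / q := sub_nonneg.2 ((div_le_one (by linarith)).2 hq)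
  rw [measureReal_def, measureReal_def, ENNReal.toReal_rpow, ← ENNReal.toReal_mul]
  exact ENNReal.toReal_mono (ENNReal.mul_ne_top hLq.2.ne (ENNReal.rpow_ne_top_of_nonneg hα hAfin))
    (withDensity_ofReal_apply_le_eLpNorm_mul_rpow hh hLq.1 hq hA)

section HyperRect

variable {d : ℕ}

theorem mem_hyperRect_iff {y r w : Fin d → ℝ} : w ∈ hyperRect y r ↔ ∀ i, |w i - y i| ≤ r i := by
  simp only [hyperRect, mem_Icc, Pi.le_def, Pi.sub_apply, Pi.add_apply, abs_le, ← forall_and]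
  exact forall_congr' fun i => by constructor <;> rintro ⟨h₁, h₂⟩ <;> constructor <;> linarith

theorem measurableSet_hyperRect (y r : Fin d → ℝ) : MeasurableSet (hyperRect y r) :=
  measurableSet_Icc

theorem hyperRect_subset_hyperRect {y y' r r' : Fin d → ℝ} (h : ∀ i, |y i - y' i| ≤ r' i - r i) :
    hyperRect y r ⊆ hyperRect y' r' := fun w hw => mem_hyperRect_iff.2 fun i => by
  have := mem_hyperRect_iff.1 hw i
  linarith [abs_sub_le (w i) (y i) (y' i), h i]

theorem hyperRect_mono {y r r' : Fin d → ℝ} (h : r ≤ r') : hyperRect y r ⊆ hyperRect y r' :=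
  hyperRect_subset_hyperRect fun i => by simpa using h i

theorem hyperRect_zero_smul (y r : Fin d → ℝ) : hyperRect y ((0 : ℝ) • r) = {y} := by
  simp [hyperRect]

theorem volume_real_hyperRect_smul {y r : Fin d → ℝ} (hr : 0 ≤ r) {s : ℝ} (hs : 0 ≤ s) :
    volume.real (hyperRect y (s • r)) = ∏ i, 2 * s * r i := by
  rw [measureReal_def, hyperRect, Real.volume_Icc_pi_toReal]
  · congr 1 with i
    simp only [Pi.add_apply, Pi.sub_apply, Pi.smul_apply, smul_eq_mul]
    ring
  · exact sub_le_self _ (smul_nonneg hs hr) |>.trans (le_add_of_nonneg_right (smul_nonneg hs hr))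

theorem volume_real_hyperRect_smul_sdiff_le {y r : Fin d → ℝ} (hr0 : 0 ≤ r) (hr1 : ∀ i, r i ≤ 1)
    {s s' M : ℝ} (hs : 0 ≤ s) (hss' : s ≤ s') (hM : 1 ≤ M) (hs'M : 2 * s' ≤ M) :
    volume.real (hyperRect y (s' • r) \ hyperRect y (s • r)) ≤ M ^ d * (2 * d * (s' - s)) := by
  have hsub : hyperRect y (s • r) ⊆ hyperRect y (s' • r) :=
    hyperRect_mono (smul_le_smul_of_nonneg_right hss' hr0)
  rw [measureReal_sdiff hsub (measurableSet_hyperRect _ _)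
      (isCompact_Icc.measure_lt_top.ne), volume_real_hyperRect_smul hr0 (hs.trans hss'),
    volume_real_hyperRect_smul hr0 hs]
  calc ∏ i, 2 * s' * r i - ∏ i, 2 * s * r i
      ≤ M ^ (Finset.univ : Finset (Fin d)).card * ∑ i, (2 * s' * r i - 2 * s * r i) :=
        prod_sub_prod_le_pow_card_mul_sum _ hM (fun i _ => mul_nonneg (by positivity) (hr0 i))
          (fun i _ => by have := hr0 i; gcongr)
          (fun i _ => by nlinarith [hr0 i, hr1 i])
    _ ≤ M ^ d * ∑ _i : Fin d, 2 * (s' - s) := by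
        rw [Finset.card_univ, Fintype.card_fin]
        gcongr with i
        nlinarith [hr0 i, hr1 i]
    _ = M ^ d * (2 * d * (s' - s)) := by
        rw [Finset.sum_const, Finset.card_univ, Fintype.card_fin, nsmul_eq_mul]; ring

end HyperRect

theorem measureReal_hyperRect_smul_le_add {d : ℕ} {μ : Measure (Fin d → ℝ)} [IsFiniteMeasure μ]
    [NullSingletonClass μ] {H α : ℝ} (hH : 0 ≤ H) (hα : 0 ≤ α)
    (hμ : ∀ A, MeasurableSet A → volume A ≠ ∞ → μ.real A ≤ H * volume.real A ^ α)
    {y r : Fin d → ℝ} (hr0 : 0 ≤ r) (hr1 : ∀ i, r i ≤ 1) {s s' M : ℝ} (hss' : s ≤ s')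
    (hs' : 0 ≤ s') (hM : 1 ≤ M) (hs'M : 2 * s' ≤ M) :
    μ.real (hyperRect y (s' • r)) ≤
      μ.real (hyperRect y (s • r)) + H * (M ^ d * (2 * d * (s' - s))) ^ α := by
  have key : ∀ t, 0 ≤ t → t ≤ s' → μ.real (hyperRect y (s' • r)) ≤
      μ.real (hyperRect y (t • r)) + H * (M ^ d * (2 * d * (s' - t))) ^ α := by
    intro t ht hts'
    have hsub : hyperRect y (t • r) ⊆ hyperRect y (s' • r) :=
      hyperRect_mono (smul_le_smul_of_nonneg_right hts' hr0)
    have hshell := hμ (hyperRect y (s' • r) \ hyperRect y (t • r))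
      ((measurableSet_hyperRect _ _).diff (measurableSet_hyperRect _ _))
      ((measure_mono sdiff_subset).trans_lt isCompact_Icc.measure_lt_top).ne
    rw [measureReal_sdiff hsub (measurableSet_hyperRect _ _)] at hshell
    have hvol := volume_real_hyperRect_smul_sdiff_le (y := y) hr0 hr1 ht hts' hM hs'M
    have := mul_le_mul_of_nonneg_left
      (Real.rpow_le_rpow measureReal_nonneg hvol hα) hH
    linarith
  -- a negative radius is compared with the μ-null rectangle `{y}` of radius `0`
  rcases le_total 0 s with hs | hs
  · exact key s hs hss'
  · calc μ.real (hyperRect y (s' • r))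
        ≤ μ.real (hyperRect y ((0 : ℝ) • r)) + H * (M ^ d * (2 * d * (s' - 0))) ^ α :=
          key 0 le_rfl hs'
      _ ≤ μ.real (hyperRect y (s • r)) + H * (M ^ d * (2 * d * (s' - s))) ^ α := by
          rw [hyperRect_zero_smul, measureReal_def, measure_singleton, ENNReal.toReal_zero]
          gcongr
          exact measureReal_nonneg

theorem unitCube_subset_hyperRect {d : ℕ} {y v : Fin d → ℝ} (hy : y ∈ unitCube d)
    (hv : ∀ i, 1 ≤ v i) : unitCube d ⊆ hyperRect y v := fun w hw =>
  mem_hyperRect_iff.2 fun i => by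
    have hw0 : (0 : ℝ) ≤ w i := hw.1 i
    have hw1 : w i ≤ 1 := hw.2 i
    have hy0 : (0 : ℝ) ≤ y i := hy.1 i
    have hy1 : y i ≤ 1 := hy.2 i
    exact abs_le.2 ⟨by linarith [hv i], by linarith [hv i]⟩

section Radius

variable {d : ℕ} {μ : Measure (Fin d → ℝ)} {f : (Fin d → ℝ) → (Fin d → ℝ)}
  {r : Fin d → ℝ} {l : (Fin d → ℝ) → ℝ}

theorem radius_le_of_le_measureReal
    (hllt : ∀ x, ∀ s : ℝ, 0 ≤ s → s < l x → μ.real (hyperRect (f x) (s • r)) < ∏ i, r i)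
    {x : Fin d → ℝ} {s : ℝ} (hs : 0 ≤ s) (h : ∏ i, r i ≤ μ.real (hyperRect (f x) (s • r))) :
    l x ≤ s :=
  not_lt.1 fun hlt => (h.trans_lt (hllt x s hs hlt)).false

variable [IsFiniteMeasure μ]

theorem radius_le_add_of_abs_sub_le (hl0 : ∀ x, 0 ≤ l x)
    (hleq : ∀ x, μ.real (hyperRect (f x) (l x • r)) = ∏ i, r i)
    (hllt : ∀ x, ∀ s : ℝ, 0 ≤ s → s < l x → μ.real (hyperRect (f x) (s • r)) < ∏ i, r i)
    {x z : Fin d → ℝ} {κ : ℝ} (hκ : 0 ≤ κ) (hfxz : ∀ i, |f x i - f z i| ≤ κ * r i) :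
    l x ≤ l z + κ := by
  refine radius_le_of_le_measureReal hllt (add_nonneg (hl0 z) hκ) ?_
  rw [← hleq z]
  refine measureReal_mono (hyperRect_subset_hyperRect fun i => ?_)
  simpa [abs_sub_comm, add_mul] using hfxz i

theorem hyperRect_radius_subset_add (hl0 : ∀ x, 0 ≤ l x)
    (hleq : ∀ x, μ.real (hyperRect (f x) (l x • r)) = ∏ i, r i)
    (hllt : ∀ x, ∀ s : ℝ, 0 ≤ s → s < l x → μ.real (hyperRect (f x) (s • r)) < ∏ i, r i)
    (hr : 0 ≤ r) {x z : Fin d → ℝ} {κ : ℝ} (hκ : 0 ≤ κ) (hfxz : ∀ i, |f x i - f z i| ≤ κ * r i) :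
    hyperRect (f x) (l x • r) ⊆ hyperRect (f z) ((l z + 2 * κ) • r) := by
  have hlxz := radius_le_add_of_abs_sub_le hl0 hleq hllt hκ hfxz
  refine hyperRect_subset_hyperRect fun i => ?_
  simp only [Pi.smul_apply, smul_eq_mul, ← sub_mul]
  exact (hfxz i).trans (mul_le_mul_of_nonneg_right (by linarith) (hr i))

theorem hyperRect_sub_radius_subset (hl0 : ∀ x, 0 ≤ l x)
    (hleq : ∀ x, μ.real (hyperRect (f x) (l x • r)) = ∏ i, r i)
    (hllt : ∀ x, ∀ s : ℝ, 0 ≤ s → s < l x → μ.real (hyperRect (f x) (s • r)) < ∏ i, r i)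
    (hr : 0 ≤ r) {x z : Fin d → ℝ} {κ : ℝ} (hκ : 0 ≤ κ) (hfxz : ∀ i, |f x i - f z i| ≤ κ * r i) :
    hyperRect (f z) ((l z - 2 * κ) • r) ⊆ hyperRect (f x) (l x • r) := by
  have hlzx := radius_le_add_of_abs_sub_le hl0 hleq hllt hκ fun i => by
    rw [abs_sub_comm]; exact hfxz i
  refine hyperRect_subset_hyperRect fun i => ?_
  simp only [Pi.smul_apply, smul_eq_mul, ← sub_mul]
  rw [abs_sub_comm]
  exact (hfxz i).trans (mul_le_mul_of_nonneg_right (by linarith) (hr i))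

end Radius

theorem radius_le_of_unitCube_subset {d : ℕ} {μ : Measure (Fin d → ℝ)} [IsProbabilityMeasure μ]
    (hμcube : μ (unitCube d) = 1) {f : (Fin d → ℝ) → (Fin d → ℝ)} {r : Fin d → ℝ}
    {l : (Fin d → ℝ) → ℝ} (hleq : ∀ x, μ.real (hyperRect (f x) (l x • r)) = ∏ i, r i)
    (hllt : ∀ x, ∀ s : ℝ, 0 ≤ s → s < l x → μ.real (hyperRect (f x) (s • r)) < ∏ i, r i)
    {x : Fin d → ℝ} {W : ℝ} (hW : 0 ≤ W) (hcube : unitCube d ⊆ hyperRect (f x) (W • r)) :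
    l x ≤ W := by
  refine radius_le_of_le_measureReal hllt hW ?_
  calc ∏ i, r i = μ.real (hyperRect (f x) (l x • r)) := (hleq x).symm
    _ ≤ μ.real (unitCube d) := by
      rw [measureReal_def μ (unitCube d), hμcube]; exact measureReal_le_one
    _ ≤ μ.real (hyperRect (f x) (W • r)) := measureReal_mono hcube

theorem upperMinkContent_frontier_hyperRect_inter_unitCube_le {d : ℕ} (y v : Fin d → ℝ) :
    upperMinkContent d (frontier (hyperRect y v ∩ unitCube d)) ≤
      ENNReal.ofReal (3 ^ d * (4 * d)) := by
  rw [hyperRect, unitCube, Icc_inter_Icc]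
  refine upperMinkContent_frontier_box_le (fun i => ?_) subset_rfl ?_
  · have h0 : (0 : ℝ) ≤ ((y - v) ⊔ 0) i := le_sup_right
    have h1 : ((y + v) ⊓ 1) i ≤ 1 := inf_le_right
    linarith
  · rw [← pi_univ_Icc]
    exact pi_mono fun i _ => Ioo_subset_Icc_self

def gridCell {d : ℕ} (a : Fin d → ℝ) (δ : ℝ) {K : ℕ} (j : Fin d → Fin K) : Set (Fin d → ℝ) :=
  univ.pi fun i => Ico (a i + δ * (j i : ℕ)) (a i + δ * ((j i : ℕ) + 1))

section Grid

variable {d K : ℕ} {a : Fin d → ℝ} {δ : ℝ}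

theorem measurableSet_gridCell (j : Fin d → Fin K) : MeasurableSet (gridCell a δ j) :=
  MeasurableSet.univ_pi fun _ => measurableSet_Ico

theorem gridCell_index_eq_floor (hδ : 0 < δ) {j : Fin d → Fin K} {x : Fin d → ℝ}
    (hx : x ∈ gridCell a δ j) (i : Fin d) : (j i : ℕ) = ⌊(x i - a i) / δ⌋₊ := by
  obtain ⟨h₁, h₂⟩ := hx i (mem_univ i)
  refine ((Nat.floor_eq_iff (div_nonneg ?_ hδ.le)).2
    ⟨(le_div_iff₀ hδ).2 ?_, (div_lt_iff₀ hδ).2 ?_⟩).symm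
  · nlinarith [(j i : ℕ).cast_nonneg (α := ℝ)]
  · linarith
  · linarith

theorem pairwise_disjoint_gridCell (hδ : 0 < δ) :
    Pairwise (Disjoint on (gridCell a δ : (Fin d → Fin K) → Set (Fin d → ℝ))) :=
  fun _ _ hjk => disjoint_left.2 fun _ hxj hxk => hjk <| funext fun i => Fin.ext <|
    (gridCell_index_eq_floor hδ hxj i).trans (gridCell_index_eq_floor hδ hxk i).symm

theorem exists_mem_gridCell (hδ : 0 < δ) {x : Fin d → ℝ} (hax : a ≤ x)
    (hxK : ∀ i, x i - a i < K * δ) : ∃ j : Fin d → Fin K, x ∈ gridCell a δ j := by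
  have hnn : ∀ i, 0 ≤ (x i - a i) / δ := fun i => div_nonneg (sub_nonneg.2 (hax i)) hδ.le
  refine ⟨fun i => ⟨⌊(x i - a i) / δ⌋₊, (Nat.floor_lt (hnn i)).2 ((div_lt_iff₀ hδ).2 (hxK i))⟩,
    fun i _ => ⟨?_, ?_⟩⟩
  · have := (le_div_iff₀ hδ).1 (Nat.floor_le (hnn i))
    simp only
    linarith
  · have := (div_lt_iff₀ hδ).1 (Nat.lt_floor_add_one ((x i - a i) / δ))
    simp only
    linarith

theorem norm_sub_le_of_mem_gridCell (hδ : 0 ≤ δ) {j : Fin d → Fin K} {x y : Fin d → ℝ}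
    (hx : x ∈ gridCell a δ j) (hy : y ∈ gridCell a δ j) : ‖x - y‖ ≤ δ :=
  (pi_norm_le_iff_of_nonneg hδ).2 fun i => by
    obtain ⟨hx₁, hx₂⟩ := hx i (mem_univ i)
    obtain ⟨hy₁, hy₂⟩ := hy i (mem_univ i)
    rw [Pi.sub_apply, Real.norm_eq_abs, abs_le]
    constructor <;> linarith

theorem closedBall_eq_pi_Icc (x₀ : Fin d → ℝ) {ρ : ℝ} (hρ : 0 ≤ ρ) :
    closedBall x₀ ρ = univ.pi fun i => Icc (x₀ i - ρ) (x₀ i + ρ) := by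
  simp only [closedBall_pi _ hρ, Real.closedBall_eq_Icc]

theorem iUnion_closedBall_inter_gridCell (hδ : 0 < δ) (x₀ : Fin d → ℝ) {ρ : ℝ} (hρ : 0 ≤ ρ)
    (hK : 2 * ρ / δ < K) :
    ⋃ j : Fin d → Fin K, closedBall x₀ ρ ∩ gridCell (fun i => x₀ i - ρ) δ j = closedBall x₀ ρ := by
  refine (iUnion_subset fun j => inter_subset_left).antisymm fun x hx => ?_
  have hx' := closedBall_eq_pi_Icc x₀ hρ ▸ hx
  obtain ⟨j, hj⟩ := exists_mem_gridCell (a := fun i => x₀ i - ρ) (K := K) hδ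
    (fun i => (hx' i (mem_univ i)).1) fun i => by
      have := (hx' i (mem_univ i)).2
      have := (div_lt_iff₀ hδ).1 hK
      linarith
  exact mem_iUnion.2 ⟨j, hx, hj⟩

theorem upperMinkContent_frontier_closedBall_inter_gridCell_le (hδ1 : δ ≤ 1)
    (x₀ : Fin d → ℝ) {ρ : ℝ} (hρ : 0 ≤ ρ) (j : Fin d → Fin K) :
    upperMinkContent d (frontier (closedBall x₀ ρ ∩ gridCell (fun i => x₀ i - ρ) δ j)) ≤
      ENNReal.ofReal (3 ^ d * (4 * d)) := by
  rw [closedBall_eq_pi_Icc x₀ hρ, gridCell, ← pi_inter_distrib]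
  refine upperMinkContent_frontier_box_le
    (lo := fun i => max (x₀ i - ρ) (x₀ i - ρ + δ * (j i : ℕ)))
    (hi := fun i => min (x₀ i + ρ) (x₀ i - ρ + δ * ((j i : ℕ) + 1))) (fun i => ?_)
    (fun x hx => ⟨fun i => ?_, fun i => ?_⟩) (pi_mono fun i _ y hy => ?_)
  · have h₁ := le_max_right (x₀ i - ρ) (x₀ i - ρ + δ * (j i : ℕ))
    have h₂ := min_le_right (x₀ i + ρ) (x₀ i - ρ + δ * ((j i : ℕ) + 1))
    linarith
  · obtain ⟨⟨h₁, -⟩, h₂, -⟩ := hx i (mem_univ i)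
    exact max_le h₁ h₂
  · obtain ⟨⟨-, h₁⟩, -, h₂⟩ := hx i (mem_univ i)
    exact le_min h₁ h₂.le
  · obtain ⟨hy₁, hy₂⟩ := hy
    exact ⟨⟨(le_max_left _ _).trans hy₁.le, hy₂.le.trans (min_le_left _ _)⟩,
      (le_max_right _ _).trans hy₁.le, hy₂.trans_le (min_le_right _ _)⟩

end Grid

theorem measureReal_inter_bounds_of_partition {α ι : Type*} [MeasurableSpace α] {μ : Measure α}
    [IsFiniteMeasure μ] [Fintype ι] {F : ι → Set α} (hFd : Pairwise (Disjoint on F))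
    (hFm : ∀ j, MeasurableSet (F j)) {S : Set α} {a b E : ℝ}
    (hpiece : ∀ j, ∃ L U, MeasurableSet L ∧ L ⊆ F j ∩ S ∧ F j ∩ S ⊆ U ∧
      μ.real (F j) * a - E ≤ μ.real L ∧ μ.real U ≤ μ.real (F j) * b + E) :
    μ.real (⋃ j, F j) * a - Fintype.card ι * E ≤ μ.real ((⋃ j, F j) ∩ S) ∧
      μ.real ((⋃ j, F j) ∩ S) ≤ μ.real (⋃ j, F j) * b + Fintype.card ι * E := by
  choose L U hLm hLS hSU hL hU using hpiece
  have hLd : Pairwise (Disjoint on L) := fun j k hjk =>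
    (hFd hjk).mono ((hLS j).trans inter_subset_left) ((hLS k).trans inter_subset_left)
  rw [measureReal_iUnion_fintype hFd hFm]
  have hsum : ∀ c : ℝ, ∑ j, (μ.real (F j) * c) = (∑ j, μ.real (F j)) * c := fun c =>
    Finset.sum_mul _ _ _ |>.symm
  constructor
  · calc (∑ j, μ.real (F j)) * a - Fintype.card ι * E = ∑ j, (μ.real (F j) * a - E) := by
          simp [Finset.sum_sub_distrib, hsum]
      _ ≤ ∑ j, μ.real (L j) := Finset.sum_le_sum fun j _ => hL j
      _ = μ.real (⋃ j, L j) := (measureReal_iUnion_fintype hLd hLm).symm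
      _ ≤ μ.real ((⋃ j, F j) ∩ S) := measureReal_mono (iUnion_subset fun j =>
          (hLS j).trans (inter_subset_inter_left S (subset_iUnion F j)))
  · calc μ.real ((⋃ j, F j) ∩ S) ≤ μ.real (⋃ j, U j) := measureReal_mono (by
          rw [iUnion_inter]; exact iUnion_mono hSU)
      _ ≤ ∑ j, μ.real (U j) := measureReal_iUnion_fintype_le U
      _ ≤ ∑ j, (μ.real (F j) * b + E) := Finset.sum_le_sum fun j _ => hU j
      _ = (∑ j, μ.real (F j)) * b + Fintype.card ι * E := by
          simp [Finset.sum_add_distrib, hsum]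

def hitSet {d : ℕ} (T f : (Fin d → ℝ) → (Fin d → ℝ)) (n : ℕ) (r : Fin d → ℝ)
    (l : (Fin d → ℝ) → ℝ) : Set (Fin d → ℝ) :=
  {x ∈ unitCube d | T^[n] x ∈ hyperRect (f x) (l x • r)}

theorem Ehat_of_ne_zero {d : ℕ} {T f : (Fin d → ℝ) → (Fin d → ℝ)} {r : ℕ → Fin d → ℝ}
    {l : ℕ → (Fin d → ℝ) → ℝ} {n : ℕ} (hr : r n ≠ 0) :
    Ehat d T f r l n = hitSet T f n (r n) (l n) :=
  if_neg hr

section FixedTime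

/- One time `n`: `r`, `l` play the roles of `r_n`, `l_n`, `W` of `n²` and `E` of the mixing rate
`c e^{-τn}` for the class of sets whose boundary content is at most `3^d·4d`, which contains every
box met below. -/
variable {d : ℕ} {T f : (Fin d → ℝ) → (Fin d → ℝ)} {μ : Measure (Fin d → ℝ)}
  [IsProbabilityMeasure μ] (hμcube : μ (unitCube d) = 1)
  (hT : Measurable T) (hTmaps : MapsTo T (unitCube d) (unitCube d))
  {p : ℝ} (hp : 0 ≤ p) (hfl : ∀ x y, ‖f x - f y‖ ≤ p * ‖x - y‖)
  (hfmaps : MapsTo f (unitCube d) (unitCube d))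
  {r : Fin d → ℝ} {W : ℝ} (hrW : ∀ i, W⁻¹ ≤ r i)
  {l : (Fin d → ℝ) → ℝ} (hl0 : ∀ x, 0 ≤ l x)
  (hleq : ∀ x, μ.real (hyperRect (f x) (l x • r)) = ∏ i, r i)
  (hllt : ∀ x, ∀ s : ℝ, 0 ≤ s → s < l x → μ.real (hyperRect (f x) (s • r)) < ∏ i, r i)
  {n : ℕ} {E : ℝ} (hE : 0 ≤ E)
  (hmix : ∀ F G : Set (Fin d → ℝ), MeasurableSet F → MeasurableSet G →
    upperMinkContent d (frontier F) ≤ ENNReal.ofReal (3 ^ d * (4 * d)) →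
    upperMinkContent d (frontier G) ≤ ENNReal.ofReal (3 ^ d * (4 * d)) →
    |μ.real (F ∩ T^[n] ⁻¹' G) - μ.real F * μ.real G| ≤ μ.real G * E)
  {η : ℝ}
include hμcube hT hTmaps hp hfl hfmaps hrW hl0 hleq hllt hE hmix

theorem exists_sandwich_inter_hitSet (hW : 0 < W) {δ : ℝ}
    (hshell : ∀ y s s', s ≤ s' → s' - s ≤ 2 * (p * δ * W) → 0 ≤ s' → s' ≤ W + 2 * (p * δ * W) →
      μ.real (hyperRect y (s' • r)) ≤ μ.real (hyperRect y (s • r)) + η)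
    {F : Set (Fin d → ℝ)} (hFm : MeasurableSet F)
    (hFcube : F ⊆ unitCube d) (hFdiam : ∀ x ∈ F, ∀ y ∈ F, ‖x - y‖ ≤ δ)
    (hFcont : upperMinkContent d (frontier F) ≤ ENNReal.ofReal (3 ^ d * (4 * d))) :
    ∃ L U : Set (Fin d → ℝ), MeasurableSet L ∧
      L ⊆ F ∩ hitSet T f n r l ∧
      F ∩ hitSet T f n r l ⊆ U ∧
      μ.real F * (∏ i, r i - η) - E ≤ μ.real L ∧ μ.real U ≤ μ.real F * (∏ i, r i + η) + E := by
  -- With `z ∈ F` fixed, every target `R(f x, l x • r)`, `x ∈ F`, lies between two rectangles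
  -- centred at `f z`, whose radii differ from `l z` by `2pδW`.
  rcases F.eq_empty_or_nonempty with rfl | ⟨z, hz⟩
  · exact ⟨∅, ∅, MeasurableSet.empty, empty_subset _, by simp, by simp [hE], by simp [hE]⟩
  have hδ : 0 ≤ δ := (norm_nonneg _).trans (hFdiam z hz z hz)
  set κ := p * δ * W
  have hκ : 0 ≤ κ := by positivity
  have hr : 0 ≤ r := fun i => (inv_pos.2 hW).le.trans (hrW i)
  have hclose : ∀ x ∈ F, ∀ i, |f x i - f z i| ≤ κ * r i := fun x hx i =>
    calc |f x i - f z i| ≤ ‖f x - f z‖ := norm_le_pi_norm (f x - f z) i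
      _ ≤ p * δ := (hfl x z).trans (mul_le_mul_of_nonneg_left (hFdiam x hx z hz) hp)
      _ = κ * W⁻¹ := by rw [mul_assoc, mul_inv_cancel₀ hW.ne', mul_one]
      _ ≤ κ * r i := mul_le_mul_of_nonneg_left (hrW i) hκ
  have hlz : l z ≤ W := radius_le_of_unitCube_subset hμcube hleq hllt hW.le
    (unitCube_subset_hyperRect (hfmaps (hFcube hz)) fun i => by
      simpa [hW.ne'] using mul_le_mul_of_nonneg_left (hrW i) hW.le)
  set Gp := hyperRect (f z) ((l z + 2 * κ) • r) ∩ unitCube d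
  set Gm := hyperRect (f z) ((l z - 2 * κ) • r) ∩ unitCube d
  have hGpm : MeasurableSet Gp := (measurableSet_hyperRect _ _).inter measurableSet_Icc
  have hGmm : MeasurableSet Gm := (measurableSet_hyperRect _ _).inter measurableSet_Icc
  have hGp : μ.real Gp ≤ ∏ i, r i + η := by
    calc μ.real Gp ≤ μ.real (hyperRect (f z) ((l z + 2 * κ) • r)) :=
          measureReal_mono inter_subset_left
      _ ≤ μ.real (hyperRect (f z) (l z • r)) + η :=
        hshell _ _ _ (by linarith) (by linarith) (by linarith [hl0 z]) (by linarith)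
      _ = ∏ i, r i + η := by rw [hleq]
  have hGm : ∏ i, r i - η ≤ μ.real Gm := by
    have hcube : μ (unitCube d)ᶜ = 0 := (prob_compl_eq_zero_iff measurableSet_Icc).2 hμcube
    rw [measureReal_def, measure_inter_conull hcube, ← measureReal_def, ← hleq z]
    linarith [hshell (f z) (l z - 2 * κ) (l z) (by linarith) (by linarith) (hl0 z) (by linarith)]
  have hF0 : 0 ≤ μ.real F := measureReal_nonneg
  refine ⟨F ∩ T^[n] ⁻¹' Gm, F ∩ T^[n] ⁻¹' Gp, hFm.inter (hGmm.preimage (hT.iterate n)),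
    fun x ⟨hxF, hxG⟩ => ⟨hxF, hFcube hxF,
      hyperRect_sub_radius_subset hl0 hleq hllt hr hκ (hclose x hxF) hxG.1⟩,
    fun x ⟨hxF, hxcube, hxS⟩ => ⟨hxF,
      hyperRect_radius_subset_add hl0 hleq hllt hr hκ (hclose x hxF) hxS,
      hTmaps.iterate n hxcube⟩, ?_, ?_⟩
  · have hmixm := (abs_le.1 (hmix F Gm hFm hGmm hFcont
      (upperMinkContent_frontier_hyperRect_inter_unitCube_le _ _))).1
    nlinarith [mul_le_mul_of_nonneg_left hGm hF0, mul_le_mul_of_nonneg_right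
      (measureReal_le_one (μ := μ) (s := Gm)) hE]
  · have hmixp := (abs_le.1 (hmix F Gp hFm hGpm hFcont
      (upperMinkContent_frontier_hyperRect_inter_unitCube_le _ _))).2
    nlinarith [mul_le_mul_of_nonneg_left hGp hF0, mul_le_mul_of_nonneg_right
      (measureReal_le_one (μ := μ) (s := Gp)) hE]

theorem measureReal_closedBall_inter_hitSet_bounds (hW : 0 < W) {δ : ℝ} (hδ : 0 < δ) (hδ1 : δ ≤ 1)
    (hshell : ∀ y s s', s ≤ s' → s' - s ≤ 2 * (p * δ * W) → 0 ≤ s' → s' ≤ W + 2 * (p * δ * W) →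
      μ.real (hyperRect y (s' • r)) ≤ μ.real (hyperRect y (s • r)) + η)
    {x₀ : Fin d → ℝ} {ρ : ℝ} (hρ : 0 ≤ ρ) (hB : closedBall x₀ ρ ⊆ unitCube d) :
    μ.real (closedBall x₀ ρ) * (∏ i, r i - η) - (2 * ρ / δ + 1) ^ d * E ≤
        μ.real (closedBall x₀ ρ ∩ hitSet T f n r l) ∧
      μ.real (closedBall x₀ ρ ∩ hitSet T f n r l) ≤
        μ.real (closedBall x₀ ρ) * (∏ i, r i + η) + (2 * ρ / δ + 1) ^ d * E := by
  set K := ⌊2 * ρ / δ⌋₊ + 1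
  have hK : 2 * ρ / δ < K := by simpa [K] using Nat.lt_floor_add_one (2 * ρ / δ)
  have hcard : (Fintype.card (Fin d → Fin K) : ℝ) ≤ (2 * ρ / δ + 1) ^ d := by
    simp only [Fintype.card_fun, Fintype.card_fin, Nat.cast_pow, K, Nat.cast_add, Nat.cast_one]
    gcongr
    exact Nat.floor_le (by positivity)
  have hbounds := measureReal_inter_bounds_of_partition (μ := μ) (a := ∏ i, r i - η)
    (b := ∏ i, r i + η) (E := E)
    (F := fun j : Fin d → Fin K => closedBall x₀ ρ ∩ gridCell (fun i => x₀ i - ρ) δ j)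
    (fun j k hjk => ((pairwise_disjoint_gridCell hδ) hjk).mono inter_subset_right
      inter_subset_right)
    (fun j => measurableSet_closedBall.inter (measurableSet_gridCell j))
    (S := hitSet T f n r l) fun j =>
      exists_sandwich_inter_hitSet hμcube hT hTmaps hp hfl hfmaps hrW hl0 hleq hllt hE hmix
        hW hshell (measurableSet_closedBall.inter (measurableSet_gridCell j))
        (inter_subset_left.trans hB)
        (fun x hx y hy => norm_sub_le_of_mem_gridCell hδ.le hx.2 hy.2)
        (upperMinkContent_frontier_closedBall_inter_gridCell_le hδ1 x₀ hρ j)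
  rw [iUnion_closedBall_inter_gridCell hδ x₀ hρ hK] at hbounds
  have hcardE := mul_le_mul_of_nonneg_right hcard hE
  constructor <;> linarith [hbounds.1, hbounds.2]

theorem measureReal_closedBall_inter_hitSet_comparable [NullSingletonClass μ] {H α : ℝ}
    (hH : 0 ≤ H) (hα : 0 ≤ α)
    (hμ : ∀ A, MeasurableSet A → volume A ≠ ∞ → μ.real A ≤ H * volume.real A ^ α)
    (hr1 : ∀ i, r i ≤ 1) (hW : 1 ≤ W) {δ : ℝ} (hδ : 0 < δ) (hδ1 : δ ≤ 1)
    (hη : H * ((2 * (1 + 2 * p) * W) ^ d * (2 * d * (2 * (p * δ * W)))) ^ α ≤ (∏ i, r i) / 4)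
    {x₀ : Fin d → ℝ} {ρ : ℝ} (hρ : 0 ≤ ρ) (hB : closedBall x₀ ρ ⊆ unitCube d)
    (hEδ : (2 * ρ / δ + 1) ^ d * E ≤ (∏ i, r i) * μ.real (closedBall x₀ ρ) / 4) :
    1 / 2 * μ.real (closedBall x₀ ρ) * ∏ i, r i ≤
        μ.real (closedBall x₀ ρ ∩ hitSet T f n r l) ∧
      μ.real (closedBall x₀ ρ ∩ hitSet T f n r l) ≤
        2 * μ.real (closedBall x₀ ρ) * ∏ i, r i := by
  have hr : 0 ≤ r := fun i => (inv_nonneg.2 (zero_le_one.trans hW)).trans (hrW i)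
  have hshell : ∀ y s s', s ≤ s' → s' - s ≤ 2 * (p * δ * W) → 0 ≤ s' →
      s' ≤ W + 2 * (p * δ * W) → μ.real (hyperRect y (s' • r)) ≤ μ.real (hyperRect y (s • r)) +
        H * ((2 * (1 + 2 * p) * W) ^ d * (2 * d * (2 * (p * δ * W)))) ^ α := by
    intro y s s' hss' hgap hs' hs'W
    have hpδW : p * δ * W ≤ p * W := by nlinarith [mul_nonneg hp (zero_le_one.trans hW)]
    refine (measureReal_hyperRect_smul_le_add (M := 2 * (1 + 2 * p) * W) hH hα hμ hr hr1 hss' hs'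
      ?_ ?_).trans ?_
    · nlinarith
    · nlinarith
    · gcongr
  obtain ⟨hlower, hupper⟩ := measureReal_closedBall_inter_hitSet_bounds hμcube hT hTmaps hp hfl
    hfmaps hrW hl0 hleq hllt hE hmix (zero_lt_one.trans_le hW) hδ hδ1 hshell hρ hB
  have hc : 0 ≤ ∏ i, r i := Finset.prod_nonneg fun i _ => hr i
  have hB0 : 0 ≤ μ.real (closedBall x₀ ρ) := measureReal_nonneg
  have hBη := mul_le_mul_of_nonneg_left hη hB0
  constructor <;> nlinarith [mul_nonneg hB0 hc]

end FixedTime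

theorem tendsto_pow_mul_rpow_mul_exp_neg (k m : ℕ) {C α b : ℝ} (hC : 0 ≤ C) (hα : 0 < α)
    (hb : 0 < b) :
    Tendsto (fun n : ℕ => (n : ℝ) ^ k * (C * (n : ℝ) ^ m * Real.exp (-b * n)) ^ α) atTop (𝓝 0) := by
  have h := ((tendsto_rpow_mul_exp_neg_mul_atTop_nhds_zero (k + m * α) (b * α)
    (mul_pos hb hα)).comp tendsto_natCast_atTop_atTop).const_mul (C ^ α)
  rw [mul_zero] at h
  refine h.congr' ?_
  filter_upwards [eventually_gt_atTop 0] with n hn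
  have hn' : (0 : ℝ) < n := Nat.cast_pos.2 hn
  rw [Function.comp_apply, Real.mul_rpow (by positivity) (Real.exp_pos _).le,
    Real.mul_rpow hC (by positivity), ← Real.rpow_natCast_mul hn'.le, ← Real.exp_mul,
    Real.rpow_add hn', Real.rpow_natCast]
  ring_nf

theorem eventually_le_inv_sq_pow_mul {d : ℕ} {X : ℕ → ℝ} {m : ℝ} (hm : 0 < m)
    (hX : Tendsto (fun n : ℕ => ((n : ℝ) ^ 2) ^ d * X n) atTop (𝓝 0)) :
    ∀ᶠ n : ℕ in atTop, X n ≤ ((n : ℝ) ^ 2)⁻¹ ^ d * m := by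
  filter_upwards [hX.eventually (ge_mem_nhds hm), eventually_gt_atTop 0] with n hXn hn
  have hpos : (0 : ℝ) < ((n : ℝ) ^ 2) ^ d := by positivity
  calc X n = ((n : ℝ) ^ 2)⁻¹ ^ d * (((n : ℝ) ^ 2) ^ d * X n) := by
        rw [inv_pow, inv_mul_cancel_left₀ hpos.ne']
    _ ≤ ((n : ℝ) ^ 2)⁻¹ ^ d * m := by gcongr

theorem eventually_shell_error_le {d : ℕ} {H α p σ : ℝ} (hα : 0 < α) (hp : 0 ≤ p)
    (hσ : 0 < σ) :
    ∀ᶠ n : ℕ in atTop, H * ((2 * (1 + 2 * p) * (n : ℝ) ^ 2) ^ d *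
      (2 * d * (2 * (p * Real.exp (-σ * n) * (n : ℝ) ^ 2)))) ^ α ≤
        ((n : ℝ) ^ 2)⁻¹ ^ d * (1 / 4) := by
  refine eventually_le_inv_sq_pow_mul (by norm_num) ?_
  have h := (tendsto_pow_mul_rpow_mul_exp_neg (2 * d) (2 * d + 2)
    (C := (2 * (1 + 2 * p)) ^ d * (4 * d * p)) (by positivity) hα hσ).const_mul H
  rw [mul_zero] at h
  refine h.congr fun n => ?_
  have hinner : (2 * (1 + 2 * p) * (n : ℝ) ^ 2) ^ d * (2 * d * (2 * (p * Real.exp (-σ * n) *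
      (n : ℝ) ^ 2))) = (2 * (1 + 2 * p)) ^ d * (4 * d * p) * (n : ℝ) ^ (2 * d + 2) *
      Real.exp (-σ * n) := by
    rw [mul_pow, ← pow_mul]
    ring
  rw [hinner, ← pow_mul]
  ring

theorem eventually_mixing_error_le {d : ℕ} (hd : 0 < d) {ρ c₀ τ m : ℝ} (hρ : 0 ≤ ρ)
    (hc₀ : 0 ≤ c₀) (hτ : 0 < τ) (hm : 0 < m) :
    ∀ᶠ n : ℕ in atTop, (2 * ρ / Real.exp (-(τ / (2 * d)) * n) + 1) ^ d * (c₀ * Real.exp (-τ * n)) ≤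
      ((n : ℝ) ^ 2)⁻¹ ^ d * m := by
  have hlim := tendsto_pow_mul_rpow_mul_exp_neg (2 * d) 0 (C := (2 * ρ + 1) ^ d * c₀)
    (by positivity) one_pos (half_pos hτ)
  simp only [pow_zero, mul_one, Real.rpow_one] at hlim
  refine eventually_le_inv_sq_pow_mul hm (squeeze_zero (fun n => by positivity) (fun n => ?_) hlim)
  have hexp : Real.exp (τ / (2 * d) * n) ^ d * Real.exp (-τ * n) = Real.exp (-(τ / 2) * n) := by
    rw [← Real.exp_nat_mul, ← Real.exp_add]
    congr 1
    field_simp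
    ring
  have hbase : 2 * ρ / Real.exp (-(τ / (2 * d)) * n) + 1 ≤
      (2 * ρ + 1) * Real.exp (τ / (2 * d) * n) := by
    rw [neg_mul, Real.exp_neg, div_inv_eq_mul]
    nlinarith [Real.one_le_exp (show 0 ≤ τ / (2 * d) * n by positivity)]
  calc ((n : ℝ) ^ 2) ^ d * ((2 * ρ / Real.exp (-(τ / (2 * d)) * n) + 1) ^ d *
        (c₀ * Real.exp (-τ * n)))
      ≤ ((n : ℝ) ^ 2) ^ d * (((2 * ρ + 1) * Real.exp (τ / (2 * d) * n)) ^ d *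
        (c₀ * Real.exp (-τ * n))) := by gcongr
    _ = (n : ℝ) ^ (2 * d) * ((2 * ρ + 1) ^ d * c₀ * Real.exp (-(τ / 2) * n)) := by
        rw [mul_pow, ← hexp, ← pow_mul]
        ring

theorem stmt12_general {d : ℕ} (hd : 0 < d)
    (T f : (Fin d → ℝ) → (Fin d → ℝ)) (μ : Measure (Fin d → ℝ))
    [IsProbabilityMeasure μ] (hμcube : μ (unitCube d) = 1)
    (hT : IsPiecewiseExpanding d T)
    (hinv : MeasurePreserving T μ μ)
    (hmix : ExpMixing d T μ)
    (h : (Fin d → ℝ) → ℝ) (hh0 : ∀ x, 0 ≤ h x)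
    (hdens : μ = volume.withDensity fun x => ENNReal.ofReal (h x))
    (q : ℝ) (hq : 1 < q) (hLq : MemLp h (ENNReal.ofReal q) volume)
    (p : ℝ) (hp : 0 < p) (hfl : ∀ x y, ‖f x - f y‖ ≤ p * ‖x - y‖)
    (hfmaps : Set.MapsTo f (unitCube d) (unitCube d))
    (r : ℕ → Fin d → ℝ)
    (hrlim : Filter.Tendsto (fun n => ‖r n‖) Filter.atTop (nhds 0))
    (hrlb : ∀ n, r n ≠ 0 → ∀ i, (((n : ℝ)) ^ 2)⁻¹ < r n i)
    (l : ℕ → (Fin d → ℝ) → ℝ) (hl0 : ∀ n x, 0 ≤ l n x)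
    (hleq : ∀ n, r n ≠ 0 → ∀ x,
        (μ (hyperRect (f x) (l n x • r n))).toReal = ∏ i, r n i)
    (hllt : ∀ n, r n ≠ 0 → ∀ x, ∀ s : ℝ, 0 ≤ s → s < l n x →
        (μ (hyperRect (f x) (s • r n))).toReal < ∏ i, r n i)
    (x₀ : Fin d → ℝ) (ρ : ℝ) (hρ : 0 < ρ)
    (hB : Metric.closedBall x₀ ρ ⊆ unitCube d) :
    ∃ N : ℕ, ∀ n, N ≤ n →
      (1 / 2) * (μ (Metric.closedBall x₀ ρ)).toReal * ∏ i, r n i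
          ≤ (μ (Metric.closedBall x₀ ρ ∩ Ehat d T f r l n)).toReal ∧
      (μ (Metric.closedBall x₀ ρ ∩ Ehat d T f r l n)).toReal
          ≤ 2 * (μ (Metric.closedBall x₀ ρ)).toReal * ∏ i, r n i := by
  obtain ⟨-, -, hTmaps, -⟩ := hT
  have : Nonempty (Fin d) := ⟨⟨0, hd⟩⟩
  have : NullSingletonClass μ := hdens ▸ inferInstance
  have hα : 0 < 1 - 1 / q := sub_pos.2 ((div_lt_one (by linarith)).2 hq)
  have hHölder : ∀ A, MeasurableSet A → volume A ≠ ∞ → μ.real A ≤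
      (eLpNorm h (ENNReal.ofReal q) volume).toReal * volume.real A ^ (1 - 1 / q) :=
    fun A hA hAfin => hdens ▸ measureReal_withDensity_ofReal_le hh0 hq.le hLq hA hAfin
  rcases eq_or_ne (μ (closedBall x₀ ρ)) 0 with hB0 | hB0
  · exact ⟨0, fun n _ => by simp [hB0, measure_mono_null inter_subset_left hB0]⟩
  replace hB0 : 0 < μ.real (closedBall x₀ ρ) := ENNReal.toReal_pos hB0 (measure_ne_top _ _)
  obtain ⟨c₀, hc₀, τ, hτ, hmixτ⟩ := hmix (3 ^ d * (4 * d)) (by positivity)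
  -- boxes of side `δ = e^{-τn/(2d)}`: their number `≈ e^{τn/2}` is beaten by the mixing rate
  obtain ⟨N, hN⟩ := eventually_atTop.1 <|
    (eventually_shell_error_le (d := d) (H := (eLpNorm h (ENNReal.ofReal q) volume).toReal) hα
      hp.le (σ := τ / (2 * d)) (by positivity)).and <|
    (eventually_mixing_error_le hd hρ.le hc₀.le hτ (div_pos hB0 four_pos)).and <|
    (hrlim.eventually (ge_mem_nhds one_pos)).and (eventually_ge_atTop 1)
  refine ⟨N, fun n hn => ?_⟩
  obtain ⟨hshell, hmixn, hr1, hn1⟩ := hN n hn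
  by_cases hrn : r n = 0
  · simp [Ehat, hrn, hd.ne']
  have hc : ((n : ℝ) ^ 2)⁻¹ ^ d ≤ ∏ i, r n i := by
    calc ((n : ℝ) ^ 2)⁻¹ ^ d = ∏ _i : Fin d, ((n : ℝ) ^ 2)⁻¹ := by simp
      _ ≤ ∏ i, r n i := Finset.prod_le_prod (fun i _ => by positivity) fun i _ => (hrlb n hrn i).le
  have hcB := mul_le_mul_of_nonneg_right hc hB0.le
  rw [Ehat_of_ne_zero hrn]
  exact measureReal_closedBall_inter_hitSet_comparable (W := (n : ℝ) ^ 2)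
    (δ := Real.exp (-(τ / (2 * d)) * n)) hμcube hinv.measurable hTmaps hp.le hfl
    hfmaps (fun i => (hrlb n hrn i).le) (hl0 n) (hleq n hrn) (hllt n hrn) (by positivity)
    (fun F G hF hG hFc hGc => hmixτ n hn1 F G hF hG hFc hGc) ENNReal.toReal_nonneg hα.le hHölder
    (fun i => (Real.le_norm_self _).trans ((norm_le_pi_norm (r n) i).trans hr1))
    (one_le_pow₀ (by exact_mod_cast hn1)) (Real.exp_pos _)
    (Real.exp_le_one_iff.2 (by nlinarith [div_pos hτ (by positivity : (0 : ℝ) < 2 * d)]))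
    (by linarith) hρ.le hB (by linarith)

/-- Lemma 3.7: two-sided estimate of `μ(B ∩ Ê_n)` for large `n`. -/
theorem stmt12 {d : ℕ} (hd : 0 < d)
    (T f : (Fin d → ℝ) → (Fin d → ℝ)) (μ : Measure (Fin d → ℝ))
    [IsProbabilityMeasure μ] (hμcube : μ (unitCube d) = 1)
    (hT : IsPiecewiseExpanding d T)
    (hinv : MeasurePreserving T μ μ)
    (hmix : ExpMixing d T μ)
    (h : (Fin d → ℝ) → ℝ) (hh0 : ∀ x, 0 ≤ h x)
    (hdens : μ = volume.withDensity fun x => ENNReal.ofReal (h x))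
    (q : ℝ) (hq : 1 < q) (hLq : MemLp h (ENNReal.ofReal q) volume)
    (p : ℝ) (hp : 0 < p) (hfl : ∀ x y, ‖f x - f y‖ ≤ p * ‖x - y‖)
    (hfmaps : Set.MapsTo f (unitCube d) (unitCube d))
    (r : ℕ → Fin d → ℝ) (hr0 : ∀ n i, 0 ≤ r n i)
    (hrlim : Filter.Tendsto (fun n => ‖r n‖) Filter.atTop (nhds 0))
    (hrlb : ∀ n, r n ≠ 0 → ∀ i, (((n : ℝ)) ^ 2)⁻¹ < r n i)
    (l : ℕ → (Fin d → ℝ) → ℝ) (hl0 : ∀ n x, 0 ≤ l n x)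
    (hleq : ∀ n, r n ≠ 0 → ∀ x,
        (μ (hyperRect (f x) (l n x • r n))).toReal = ∏ i, r n i)
    (hllt : ∀ n, r n ≠ 0 → ∀ x, ∀ s : ℝ, 0 ≤ s → s < l n x →
        (μ (hyperRect (f x) (s • r n))).toReal < ∏ i, r n i)
    (hlgt : ∀ n, r n ≠ 0 → ∀ x, ∀ s : ℝ, l n x < s →
        (∏ i, r n i) < (μ (hyperRect (f x) (s • r n))).toReal)
    (x₀ : Fin d → ℝ) (ρ : ℝ) (hρ : 0 < ρ)
    (hB : Metric.closedBall x₀ ρ ⊆ unitCube d) :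
    ∃ N : ℕ, ∀ n, N ≤ n →
      (1 / 2) * (μ (Metric.closedBall x₀ ρ)).toReal * ∏ i, r n i
          ≤ (μ (Metric.closedBall x₀ ρ ∩ Ehat d T f r l n)).toReal ∧
      (μ (Metric.closedBall x₀ ρ ∩ Ehat d T f r l n)).toReal
          ≤ 2 * (μ (Metric.closedBall x₀ ρ)).toReal * ∏ i, r n i :=
  stmt12_general hd T f μ hμcube hT hinv hmix h hh0 hdens q hq hLq p hp hfl hfmaps r hrlim hrlb l
    hl0 hleq hllt x₀ ρ hρ hB

end
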